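/- arXiv:1502.07410 — 4 statements merged into one kernel-verified Lean document; each statement's English description precedes it below -/
import Mathlib

section
/- Let G be a finite graph on n vertices, let i = √-1, and fix any function b : E → {0,1} on oriented edges with b(v,u) = -b(u,v) mod 4. For each oriented edge choose s(u,v) uniformly and independently from {0,2}, and set s' = s + b mod 4. Then the expectation over s of det(xI - A_{s'}(i)) equals the matching polynomial μ_G(x). -/
open scoped Classical

/-- The matrix `A_s(t)` of a shift function `s`. -/
def shiftMatrix {V : Type} [DecidableEq V] (G : SimpleGraph V) [DecidableRel G.Adj]
    {k : ℕ} (s : V → V → ZMod k) (t : ℂ) : Matrix V V ℂ :=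
  Matrix.of (fun u v => if G.Adj u v then t ^ (s u v).val else 0)

/-- The antisymmetric shift function determined by independent values `f u v` on
oriented edges `(u,v)` with `u < v`. -/
def orientShift {V : Type} [LinearOrder V] {k : ℕ} (f : V → V → ZMod k) (u v : V) : ZMod k :=
  if u < v then f u v else - f v u

/-- The number of matchings of `G` with exactly `k` edges. -/
noncomputable def matchingCount {V : Type} [Fintype V] [DecidableEq V]
    (G : SimpleGraph V) (k : ℕ) : ℕ :=
  ((G.edgeFinset.powersetCard k).filter
    (fun M => ∀ e ∈ M, ∀ f ∈ M, e ≠ f → ∀ v : V, v ∈ e → v ∉ f)).card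

/-- The matching polynomial `μ_G` of `G`, evaluated at `x`. -/
noncomputable def matchingPolyEval {V : Type} [Fintype V] [DecidableEq V]
    (G : SimpleGraph V) (x : ℂ) : ℂ :=
  ∑ k ∈ Finset.range (Fintype.card V / 2 + 1),
    (-1 : ℂ) ^ k * (matchingCount G k) * x ^ (Fintype.card V - 2 * k)

/-!
Expand each determinant over permutations `σ`. The entry of `A_{s'}(i)` at `(σ v, v)` is the
entry of `A_b(i)` times the sign `(-1)^c` that `c` attaches to the edge `{v, σ v}`, so averaging
over `c` kills every `σ` that meets some edge an odd number of times, that is, every `σ` that is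
not an involution. For an involution whose 2-cycles are edges of `G`, the two factors of each
2-cycle multiply to `-i^b · -i^(-b) = 1` because `b` is antisymmetric, and the sign of `σ` is
`(-1)^k` for `k` 2-cycles. These involutions are in bijection with the matchings of `G`, so what
is left is `μ_G(x)`.
-/

open Finset

lemma Complex.I_pow_val_add (a b : ZMod 4) :
    Complex.I ^ (a + b).val = Complex.I ^ a.val * Complex.I ^ b.val := by
  rw [← pow_add, Complex.I_pow_eq_pow_mod (_ + _), ZMod.val_add]

lemma Complex.I_pow_val_mul_I_pow_val_neg (a : ZMod 4) :
    Complex.I ^ a.val * Complex.I ^ (-a).val = 1 := by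
  rw [← Complex.I_pow_val_add, add_neg_cancel, ZMod.val_zero, pow_zero]

lemma Complex.I_pow_val_add_two_mul (a : ZMod 4) (e : ZMod 2) :
    Complex.I ^ (a + 2 * (e.val : ZMod 4)).val = Complex.I ^ a.val * (-1) ^ e.val := by
  have h : ((2 : ZMod 4) * (e.val : ZMod 4)).val = 2 * e.val := by revert e; decide
  rw [Complex.I_pow_val_add, h, pow_mul, Complex.I_sq]

section ShiftMatrix

variable {V : Type} [DecidableEq V] (G : SimpleGraph V) [DecidableRel G.Adj]

lemma shiftMatrix_apply_self {k : ℕ} (s : V → V → ZMod k) (t : ℂ) (v : V) :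
    shiftMatrix G s t v v = 0 := by
  simp [shiftMatrix]

lemma shiftMatrix_add_two_mul_apply (b : V → V → ZMod 4) (c : V → V → ZMod 2) (u v : V) :
    shiftMatrix G (fun u v => b u v + 2 * ((c u v).val : ZMod 4)) Complex.I u v
      = shiftMatrix G b Complex.I u v * (-1) ^ (c u v).val := by
  simp only [shiftMatrix, Matrix.of_apply, Complex.I_pow_val_add_two_mul, ite_mul, zero_mul]

lemma shiftMatrix_mul_shiftMatrix_swap {b : V → V → ZMod 4} (hb : ∀ u v, b v u = -b u v)
    (u v : V) :
    shiftMatrix G b Complex.I u v * shiftMatrix G b Complex.I v u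
      = if G.Adj u v then 1 else 0 := by
  by_cases h : G.Adj u v
  · simp [shiftMatrix, h, h.symm, hb u v, Complex.I_pow_val_mul_I_pow_val_neg]
  · simp [shiftMatrix, h]

end ShiftMatrix

lemma Matrix.prod_smul_one_sub_apply_perm {R V : Type*} [CommRing R] [Fintype V]
    [DecidableEq V] (A : Matrix V V R) (hA : ∀ v, A v v = 0) (x : R) (σ : Equiv.Perm V) :
    ∏ v, (x • 1 - A) (σ v) v
      = x ^ (Fintype.card V - #σ.support) * ∏ v ∈ σ.support, -A (σ v) v := by
  rw [← prod_mul_prod_compl σ.support, mul_comm, ← card_compl]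
  congr 1
  · rw [← prod_const]
    refine prod_congr rfl fun v hv => ?_
    rw [Equiv.Perm.notMem_support.1 (mem_compl.1 hv)]
    simp [hA]
  · refine prod_congr rfl fun v hv => ?_
    simp [Matrix.one_apply_ne (Equiv.Perm.mem_support.1 hv)]

lemma sum_prod_neg_one_pow_val {R α ι : Type*} [CommRing R] [Fintype ι] [DecidableEq ι]
    (S : Finset α) (key : α → ι) :
    ∑ d : ι → ZMod 2, ∏ a ∈ S, (-1 : R) ^ (d (key a)).val
      = if ∀ a ∈ S, Even #{b ∈ S | key b = key a} then 2 ^ Fintype.card ι else 0 := by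
  have hfiber (d : ι → ZMod 2) : ∏ a ∈ S, (-1 : R) ^ (d (key a)).val
      = ∏ i, ((-1 : R) ^ (d i).val) ^ #{a ∈ S | key a = i} := by
    rw [← prod_fiberwise S key]
    refine Fintype.prod_congr _ _ fun i => ?_
    rw [← prod_const]
    exact prod_congr rfl fun a ha => by rw [(mem_filter.1 ha).2]
  have hsum (m : ℕ) : ∑ z : ZMod 2, ((-1 : R) ^ z.val) ^ m = if Even m then 2 else 0 := by
    rw [show (univ : Finset (ZMod 2)) = {0, 1} from rfl, sum_pair zero_ne_one, ZMod.val_zero,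
      ZMod.val_one]
    rcases Nat.even_or_odd m with h | h
    · simp [h, h.neg_one_pow, one_add_one_eq_two]
    · simp [h.neg_one_pow, Nat.not_even_iff_odd.2 h]
  have heven :
      (∀ i, Even #{a ∈ S | key a = i}) ↔ ∀ a ∈ S, Even #{b ∈ S | key b = key a} := by
    refine ⟨fun h a _ => h _, fun h i => ?_⟩
    by_cases hi : ∃ a ∈ S, key a = i
    · obtain ⟨a, ha, rfl⟩ := hi
      exact h a ha
    · rw [filter_false_of_mem fun a ha hai => hi ⟨a, ha, hai⟩]
      exact ⟨0, rfl⟩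
  simp_rw [hfiber]
  rw [← Fintype.prod_sum fun i (z : ZMod 2) => ((-1 : R) ^ z.val) ^ #{a ∈ S | key a = i}]
  simp_rw [hsum]
  rw [Fintype.prod_ite_zero, prod_const, card_univ]
  exact if_congr heven rfl rfl

namespace Equiv.Perm

variable {V : Type} [Fintype V] [DecidableEq V]

def cyclePairs (σ : Perm V) : Finset (Sym2 V) := σ.support.image fun v => s(v, σ v)

lemma filter_mk_eq_mk (σ : Perm V) {v : V} (hv : v ∈ σ.support) :
    {w ∈ σ.support | s(w, σ w) = s(v, σ v)} = if σ (σ v) = v then {v, σ v} else {v} := by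
  rw [mem_support] at hv
  ext w
  simp only [mem_filter, mem_support, Sym2.eq_iff]
  split_ifs with h
  · simp only [mem_insert, mem_singleton]
    constructor
    · rintro ⟨-, ⟨rfl, -⟩ | ⟨rfl, -⟩⟩ <;> simp
    · rintro (rfl | rfl)
      · exact ⟨hv, Or.inl ⟨rfl, rfl⟩⟩
      · exact ⟨by rwa [h, ne_comm], Or.inr ⟨rfl, h⟩⟩
  · simp only [mem_singleton]
    constructor
    · rintro ⟨-, ⟨rfl, -⟩ | ⟨rfl, hσv⟩⟩
      · rfl
      · exact absurd hσv h
    · rintro rfl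
      exact ⟨hv, Or.inl ⟨rfl, rfl⟩⟩

lemma card_filter_mk_eq_mk (σ : Perm V) {v : V} (hv : v ∈ σ.support) :
    #{w ∈ σ.support | s(w, σ w) = s(v, σ v)} = if σ (σ v) = v then 2 else 1 := by
  rw [filter_mk_eq_mk σ hv]
  split_ifs
  · exact card_pair (mem_support.1 hv).symm
  · exact card_singleton v

lemma involutive_iff_forall_even_card (σ : Perm V) :
    Function.Involutive σ ↔
      ∀ v ∈ σ.support, Even #{w ∈ σ.support | s(w, σ w) = s(v, σ v)} := by
  refine ⟨fun hσ v hv => ?_, fun h v => ?_⟩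
  · rw [card_filter_mk_eq_mk σ hv, if_pos (hσ v)]
    exact even_two
  · by_cases hv : v ∈ σ.support
    · by_contra hσv
      have := h v hv
      rw [card_filter_mk_eq_mk σ hv, if_neg hσv] at this
      exact Nat.not_even_one this
    · rw [notMem_support.1 hv, notMem_support.1 hv]

lemma card_support_eq_two_mul_card_cyclePairs {σ : Perm V} (hσ : Function.Involutive σ) :
    #σ.support = 2 * #σ.cyclePairs := by
  rw [card_eq_sum_card_image (fun v => s(v, σ v)) σ.support, mul_comm]
  refine sum_const_nat fun e he => ?_
  obtain ⟨v, hv, rfl⟩ := mem_image.1 he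
  rw [card_filter_mk_eq_mk σ hv, if_pos (hσ v)]

lemma mk_mem_cyclePairs {σ : Perm V} (hσ : Function.Involutive σ) {v w : V} :
    s(v, w) ∈ σ.cyclePairs ↔ σ v = w ∧ σ v ≠ v := by
  simp only [cyclePairs, mem_image, mem_support, Sym2.eq_iff]
  constructor
  · rintro ⟨a, ha, ⟨rfl, rfl⟩ | ⟨rfl, rfl⟩⟩
    · exact ⟨rfl, ha⟩
    · exact ⟨hσ a, by rwa [hσ a, ne_comm]⟩
  · rintro ⟨rfl, hv⟩
    exact ⟨v, hv, Or.inl ⟨rfl, rfl⟩⟩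

lemma eq_mk_of_mem_cyclePairs {σ : Perm V} (hσ : Function.Involutive σ) {e : Sym2 V}
    (he : e ∈ σ.cyclePairs) {v : V} (hv : v ∈ e) : e = s(v, σ v) := by
  obtain ⟨w, rfl⟩ := Sym2.mem_iff_exists.1 hv
  rw [((mk_mem_cyclePairs hσ).1 he).1]

lemma eq_of_cyclePairs_eq {σ τ : Perm V} (hσ : Function.Involutive σ)
    (hτ : Function.Involutive τ) (h : σ.cyclePairs = τ.cyclePairs) : σ = τ := by
  have hmem (v w : V) : σ v = w ∧ σ v ≠ v ↔ τ v = w ∧ τ v ≠ v := by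
    rw [← mk_mem_cyclePairs hσ, ← mk_mem_cyclePairs hτ, h]
  ext v
  by_cases hσv : σ v = v
  · by_cases hτv : τ v = v
    · rw [hσv, hτv]
    · exact ((hmem v (τ v)).2 ⟨rfl, hτv⟩).1
  · exact ((hmem v (σ v)).1 ⟨rfl, hσv⟩).1.symm

lemma sign_eq_neg_one_pow_of_involutive {σ : Perm V} (hσ : Function.Involutive σ) :
    sign σ = (-1) ^ (#σ.support / 2) := by
  have hsq : σ ^ 2 = 1 := ext fun v => hσ v
  rw [sign_of_pow_two_eq_one hsq, card_fixedPoints, sum_cycleType,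
    Nat.sub_sub_self (card_le_univ _)]

end Equiv.Perm

lemma orientShift_zmod_two {V : Type} [LinearOrder V] (c : V → V → ZMod 2) (u v : V) :
    orientShift c u v = Function.uncurry c (Sym2.sortEquiv s(u, v)).1 := by
  rcases lt_trichotomy u v with h | rfl | h
  · simp [orientShift, h, h.le]
  · simp [orientShift, ZMod.neg_eq_self_mod_two]
  · simp [orientShift, h.not_gt, h.le, ZMod.neg_eq_self_mod_two]

section Matching

variable {V : Type} [DecidableEq V] {M : Finset (Sym2 V)}

noncomputable def matchingPartner (M : Finset (Sym2 V)) (v : V) : V :=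
  if h : ∃ w, s(v, w) ∈ M then h.choose else v

lemma matchingPartner_eq_of_mk_mem (hM : ∀ e ∈ M, ∀ f ∈ M, e ≠ f → ∀ v ∈ e, v ∉ f)
    {v w : V} (h : s(v, w) ∈ M) : matchingPartner M v = w := by
  have hex : ∃ w, s(v, w) ∈ M := ⟨w, h⟩
  rw [matchingPartner, dif_pos hex]
  by_contra hne
  exact hM _ hex.choose_spec _ h (Sym2.congr_right.not.2 hne) v (Sym2.mem_mk_left _ _)
    (Sym2.mem_mk_left _ _)

lemma matchingPartner_involutive (hM : ∀ e ∈ M, ∀ f ∈ M, e ≠ f → ∀ v ∈ e, v ∉ f) :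
    Function.Involutive (matchingPartner M) := by
  intro v
  by_cases hv : ∃ w, s(v, w) ∈ M
  · obtain ⟨w, hw⟩ := hv
    rw [matchingPartner_eq_of_mk_mem hM hw,
      matchingPartner_eq_of_mk_mem hM (Sym2.eq_swap ▸ hw)]
  · have hfix : matchingPartner M v = v := dif_neg hv
    rw [hfix, hfix]

lemma mk_mem_iff_matchingPartner (hM : ∀ e ∈ M, ∀ f ∈ M, e ≠ f → ∀ v ∈ e, v ∉ f)
    (hdiag : ∀ e ∈ M, ¬e.IsDiag) {v w : V} :
    s(v, w) ∈ M ↔ matchingPartner M v = w ∧ matchingPartner M v ≠ v := by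
  refine ⟨fun h => ?_, fun ⟨hvw, hv⟩ => ?_⟩
  · rw [matchingPartner_eq_of_mk_mem hM h]
    exact ⟨rfl, fun hwv => hdiag _ h (Sym2.mk_isDiag_iff.2 hwv.symm)⟩
  · rw [matchingPartner] at hvw hv
    split_ifs at hvw hv with hex
    · exact hvw ▸ hex.choose_spec
    · exact absurd rfl hv

end Matching

section EdgeInvolutions

variable {V : Type} [Fintype V] [DecidableEq V]

noncomputable def SimpleGraph.edgeInvolutions (G : SimpleGraph V) : Finset (Equiv.Perm V) :=
  {σ | Function.Involutive σ ∧ ∀ v ∈ σ.support, G.Adj v (σ v)}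

lemma SimpleGraph.mem_edgeInvolutions {G : SimpleGraph V} {σ : Equiv.Perm V} :
    σ ∈ G.edgeInvolutions ↔
      Function.Involutive σ ∧ ∀ v ∈ σ.support, G.Adj v (σ v) := by
  simp [edgeInvolutions]

lemma Equiv.Perm.cyclePairs_subset_edgeFinset_iff (G : SimpleGraph V) [Fintype G.edgeSet]
    (σ : Equiv.Perm V) :
    σ.cyclePairs ⊆ G.edgeFinset ↔ ∀ v ∈ σ.support, G.Adj v (σ v) := by
  simp [Equiv.Perm.cyclePairs, image_subset_iff]

lemma SimpleGraph.card_filter_edgeInvolutions_eq_matchingCount (G : SimpleGraph V) (k : ℕ) :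
    #{σ ∈ G.edgeInvolutions | #σ.support = 2 * k} = matchingCount G k := by
  refine card_bij (fun σ _ => σ.cyclePairs) (fun σ hσ => ?_) (fun σ hσ τ hτ h => ?_)
    (fun M hMmem => ?_)
  · rw [mem_filter, mem_edgeInvolutions] at hσ
    obtain ⟨⟨hinv, hadj⟩, hcard⟩ := hσ
    refine mem_filter.2
      ⟨mem_powersetCard.2 ⟨(σ.cyclePairs_subset_edgeFinset_iff G).2 hadj, ?_⟩,
        fun e he f hf hef v hve hvf => hef ?_⟩
    · have := Equiv.Perm.card_support_eq_two_mul_card_cyclePairs hinv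
      omega
    · rw [Equiv.Perm.eq_mk_of_mem_cyclePairs hinv he hve,
        Equiv.Perm.eq_mk_of_mem_cyclePairs hinv hf hvf]
  · rw [mem_filter, mem_edgeInvolutions] at hσ hτ
    exact Equiv.Perm.eq_of_cyclePairs_eq hσ.1.1 hτ.1.1 h
  · obtain ⟨hMcard, hM⟩ := mem_filter.1 hMmem
    obtain ⟨hMG, rfl⟩ := mem_powersetCard.1 hMcard
    have hdiag : ∀ e ∈ M, ¬e.IsDiag := fun e he =>
      G.not_isDiag_of_mem_edgeSet (G.mem_edgeFinset.1 (hMG he))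
    have hinv := matchingPartner_involutive hM
    have hpairs : hinv.toPerm.cyclePairs = M := by
      ext e
      refine Sym2.ind (fun v w => ?_) e
      exact (Equiv.Perm.mk_mem_cyclePairs hinv).trans (mk_mem_iff_matchingPartner hM hdiag).symm
    refine ⟨hinv.toPerm, mem_filter.2 ⟨mem_edgeInvolutions.2 ⟨hinv, ?_⟩, ?_⟩, hpairs⟩
    · rw [← Equiv.Perm.cyclePairs_subset_edgeFinset_iff, hpairs]
      exact hMG
    · rw [Equiv.Perm.card_support_eq_two_mul_card_cyclePairs hinv, hpairs]

lemma SimpleGraph.sum_edgeInvolutions_eq_matchingPolyEval (G : SimpleGraph V) (x : ℂ) :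
    ∑ σ ∈ G.edgeInvolutions,
        (-1 : ℂ) ^ (#σ.support / 2) * x ^ (Fintype.card V - #σ.support)
      = matchingPolyEval G x := by
  have heven : ∀ σ ∈ G.edgeInvolutions, #σ.support = 2 * (#σ.support / 2) := fun σ hσ =>
    (Nat.mul_div_cancel' (Equiv.Perm.two_dvd_card_support
      (Equiv.ext fun v => (mem_edgeInvolutions.1 hσ).1 v))).symm
  have hmaps : ∀ σ ∈ G.edgeInvolutions, #σ.support / 2 ∈ range (Fintype.card V / 2 + 1) :=
    fun σ _ => mem_range.2 (Nat.lt_succ_of_le (Nat.div_le_div_right (card_le_univ _)))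
  rw [← sum_fiberwise_of_maps_to hmaps, matchingPolyEval]
  refine sum_congr rfl fun k _ => ?_
  have hfilter : {σ ∈ G.edgeInvolutions | #σ.support / 2 = k}
      = {σ ∈ G.edgeInvolutions | #σ.support = 2 * k} :=
    filter_congr fun σ hσ => by have := heven σ hσ; omega
  have hterm : ∀ σ ∈ {σ ∈ G.edgeInvolutions | #σ.support = 2 * k},
      (-1 : ℂ) ^ (#σ.support / 2) * x ^ (Fintype.card V - #σ.support)
        = (-1) ^ k * x ^ (Fintype.card V - 2 * k) := fun σ hσ => by
    rw [(mem_filter.1 hσ).2, Nat.mul_div_cancel_left k two_pos]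
  rw [hfilter, sum_congr rfl hterm, sum_const,
    G.card_filter_edgeInvolutions_eq_matchingCount k, nsmul_eq_mul]
  ring

variable (G : SimpleGraph V) [DecidableRel G.Adj] {b : V → V → ZMod 4}

lemma prod_neg_shiftMatrix_of_involutive (hb : ∀ u v, b v u = -b u v) {σ : Equiv.Perm V}
    (hσ : Function.Involutive σ) :
    ∏ v ∈ σ.support, -shiftMatrix G b Complex.I (σ v) v
      = if ∀ v ∈ σ.support, G.Adj v (σ v) then 1 else 0 := by
  split_ifs with hadj
  · refine prod_involution (fun v _ => σ v) (fun v hv => ?_)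
      (fun v hv _ => Equiv.Perm.mem_support.1 hv)
      (fun v hv => Equiv.Perm.apply_mem_support.2 hv) (fun v _ => hσ v)
    rw [hσ v, neg_mul_neg, shiftMatrix_mul_shiftMatrix_swap G hb, if_pos (hadj v hv).symm]
  · push Not at hadj
    obtain ⟨v, hv, hnadj⟩ := hadj
    have hnadj' : ¬G.Adj (σ v) v := fun h => hnadj h.symm
    exact prod_eq_zero hv (by simp [shiftMatrix, hnadj'])

variable [LinearOrder V]

lemma sum_prod_neg_one_pow_orientShift {R : Type*} [CommRing R] (σ : Equiv.Perm V) :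
    ∑ c : V → V → ZMod 2, ∏ v ∈ σ.support, (-1 : R) ^ (orientShift c (σ v) v).val
      = if Function.Involutive σ then 2 ^ (Fintype.card V * Fintype.card V) else 0 := by
  have hkey : Function.Injective fun e : Sym2 V => (Sym2.sortEquiv e).1 :=
    Subtype.val_injective.comp Sym2.sortEquiv.injective
  simp_rw [orientShift_zmod_two, Sym2.eq_swap (a := σ _)]
  rw [← (Equiv.curry V V (ZMod 2)).sum_comp]
  simp only [Equiv.curry, Equiv.coe_fn_mk, Function.uncurry_curry]
  rw [sum_prod_neg_one_pow_val, Fintype.card_prod]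
  simp_rw [hkey.eq_iff]
  exact if_congr (σ.involutive_iff_forall_even_card).symm rfl rfl

lemma sum_prod_sub_shiftMatrix (hb : ∀ u v, b v u = -b u v) (x : ℂ) (σ : Equiv.Perm V) :
    ∑ c : V → V → ZMod 2, ∏ v, (x • (1 : Matrix V V ℂ) -
        shiftMatrix G (fun u v => b u v + 2 * ((orientShift c u v).val : ZMod 4)) Complex.I)
          (σ v) v
      = if σ ∈ G.edgeInvolutions then
          2 ^ (Fintype.card V * Fintype.card V) * x ^ (Fintype.card V - #σ.support)
        else 0 := by
  simp_rw [Matrix.prod_smul_one_sub_apply_perm _ (shiftMatrix_apply_self G _ _) x σ,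
    shiftMatrix_add_two_mul_apply, ← neg_mul, prod_mul_distrib, ← mul_sum,
    sum_prod_neg_one_pow_orientShift]
  by_cases hσ : Function.Involutive σ
  · rw [prod_neg_shiftMatrix_of_involutive G hb hσ]
    simp only [SimpleGraph.mem_edgeInvolutions, hσ, true_and]
    split_ifs <;> ring
  · simp [SimpleGraph.mem_edgeInvolutions, hσ]

lemma sum_det_sub_shiftMatrix (hb : ∀ u v, b v u = -b u v) (x : ℂ) :
    ∑ c : V → V → ZMod 2, (x • (1 : Matrix V V ℂ) -
        shiftMatrix G (fun u v => b u v + 2 * ((orientShift c u v).val : ZMod 4)) Complex.I).det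
      = 2 ^ (Fintype.card V * Fintype.card V) * ∑ σ ∈ G.edgeInvolutions,
          (-1 : ℂ) ^ (#σ.support / 2) * x ^ (Fintype.card V - #σ.support) := by
  simp_rw [Matrix.det_apply]
  rw [sum_comm]
  simp_rw [← smul_sum, sum_prod_sub_shiftMatrix G hb, smul_ite, smul_zero]
  rw [Fintype.sum_ite_mem, mul_sum]
  refine sum_congr rfl fun σ hσ => ?_
  rw [Equiv.Perm.sign_eq_neg_one_pow_of_involutive (G.mem_edgeInvolutions.1 hσ).1, Units.smul_def]
  push_cast
  ring

end EdgeInvolutions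

theorem expected_charpoly_shift4_eq_matchingPoly_general {V : Type} [Fintype V] [DecidableEq V]
    [LinearOrder V] (G : SimpleGraph V) [DecidableRel G.Adj]
    (b : V → V → ZMod 4) (hb : ∀ u v, b v u = - b u v) (x : ℂ) :
    (∑ c : V → V → ZMod 2,
        (x • (1 : Matrix V V ℂ) -
          shiftMatrix G (fun u v => b u v + 2 * ((orientShift c u v).val : ZMod 4))
            Complex.I).det)
      / 2 ^ (Fintype.card V * Fintype.card V)
    = matchingPolyEval G x := by
  rw [sum_det_sub_shiftMatrix G hb, mul_div_cancel_left₀ _ (pow_ne_zero _ two_ne_zero),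
    G.sum_edgeInvolutions_eq_matchingPolyEval]

/-- Fix any `{0,1}`-valued shift `b`.  Choosing `s` uniformly from `{0,2}` on each oriented
edge and setting `s' = s + b (mod 4)`, the expectation of `det(xI - A_{s'}(i))` equals the
matching polynomial of `G`. -/
theorem expected_charpoly_shift4_eq_matchingPoly {V : Type} [Fintype V] [DecidableEq V]
    [LinearOrder V] (G : SimpleGraph V) [DecidableRel G.Adj]
    (b : V → V → ZMod 4) (hb : ∀ u v, b v u = - b u v)
    (hb01 : ∀ u v, u < v → b u v = 0 ∨ b u v = 1) (x : ℂ) :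
    (∑ c : V → V → ZMod 2,
        (x • (1 : Matrix V V ℂ) -
          shiftMatrix G (fun u v => b u v + 2 * ((orientShift c u v).val : ZMod 4))
            Complex.I).det)
      / 2 ^ (Fintype.card V * Fintype.card V)
    = matchingPolyEval G x :=
  expected_charpoly_shift4_eq_matchingPoly_general G b hb x
end

section
/- Let π be a permutation of {1,...,n} and let ω ∈ ℂ satisfy 1 + ω + ω² = 0. Suppose for each oriented edge (u,v) of a graph G, X_{uv} is a random variable uniform on {1, ω, ω²}, independent across edges, with X_{vu} = X_{uv}^{-1}. If there exists a vertex u with π(u) = v, {u,v} an edge, and π(v) ≠ u, then E[∏_{j : π(j)≠j, {j,π(j)}∈E} X_{j,π(j)}] = 0. -/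
open Finset

theorem Equiv.Perm.sym2_mk_apply_ne {α : Type*} {π : Equiv.Perm α} {u j : α}
    (hu : π (π u) ≠ u) (hj : j ≠ u) : s(j, π j) ≠ s(u, π u) := by
  rw [Ne, Sym2.eq_iff]
  rintro (⟨rfl, -⟩ | ⟨rfl, h⟩)
  exacts [hj rfl, hu h]

section OrientShift

variable {V : Type} [LinearOrder V] {k : ℕ}

def orientShiftHom (u v : V) : (V → V → ZMod k) →+ ZMod k where
  toFun f := orientShift f u v
  map_zero' := by simp [orientShift]
  map_add' f g := by unfold orientShift; split_ifs <;> simp [add_comm]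

def edgeIndicator (e : Sym2 V) : V → V → ZMod k :=
  fun x y => if s(x, y) = e then 1 else 0

theorem orientShift_edgeIndicator_of_ne {e : Sym2 V} {u v : V} (h : s(u, v) ≠ e) :
    orientShift (edgeIndicator (k := k) e) u v = 0 := by
  simp [orientShift, edgeIndicator, h, Sym2.eq_swap]

theorem orientShift_edgeIndicator_self_ne_zero [Fact (1 < k)] (u v : V) :
    orientShift (edgeIndicator (k := k) s(u, v)) u v ≠ 0 := by
  unfold orientShift edgeIndicator
  split_ifs <;> simp_all [Sym2.eq_swap]

theorem sum_prod_orientShift_eq_zero [Fintype V] [DecidableEq V] [Fact (1 < k)]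
    {R : Type*} [CommRing R] [IsDomain R] {ψ : AddChar (ZMod k) R} (hψ : ψ.IsPrimitive)
    (π : Equiv.Perm V) {F : Finset V} {u : V} (huF : u ∈ F) (hu : π (π u) ≠ u) :
    ∑ f : V → V → ZMod k, ∏ j ∈ F, ψ (orientShift f j (π j)) = 0 := by
  set Ψ : AddChar (V → V → ZMod k) R := ∏ j ∈ F, ψ.compAddMonoidHom (orientShiftHom j (π j))
  have hΨ (f : V → V → ZMod k) : Ψ f = ∏ j ∈ F, ψ (orientShift f j (π j)) := by
    simp [Ψ, AddChar.prod_apply, orientShiftHom]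
  have hΨ_ne_one : Ψ ≠ 1 := by
    refine AddChar.ne_one_iff.2 ⟨edgeIndicator s(u, π u), ?_⟩
    rw [hΨ, prod_eq_single_of_mem u huF fun j _ hj => ?_]
    · rw [Ne, hψ.zmod_char_eq_one_iff]
      exact orientShift_edgeIndicator_self_ne_zero u (π u)
    · rw [orientShift_edgeIndicator_of_ne (π.sym2_mk_apply_ne hu hj), AddChar.map_zero_eq_one]
  simpa only [hΨ] using AddChar.sum_eq_zero_of_ne_one hΨ_ne_one

end OrientShift

/-- If some vertex `u` satisfies `π u = v` with `{u,v}` an edge but `π v ≠ u`, then the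
expectation (over independent uniform cube-root-of-unity variables `X_{uv} = ω^{s(u,v)}`,
with `X_{vu} = X_{uv}⁻¹`) of the product `∏_{j : π j ≠ j, {j, π j} ∈ E} X_{j, π j}`
vanishes. -/
theorem expectation_vanishes_of_nonmatching {V : Type} [Fintype V] [DecidableEq V]
    [LinearOrder V] (G : SimpleGraph V) [DecidableRel G.Adj]
    (π : Equiv.Perm V) (ω : ℂ) (hω : 1 + ω + ω ^ 2 = 0)
    (h : ∃ u v : V, π u = v ∧ G.Adj u v ∧ π v ≠ u) :
    (∑ f : V → V → ZMod 3,
        ∏ j ∈ Finset.univ.filter (fun j : V => π j ≠ j ∧ G.Adj j (π j)),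
          ω ^ (orientShift f j (π j)).val)
      / 3 ^ (Fintype.card V * Fintype.card V) = 0 := by
  obtain ⟨u, _, rfl, hadj, hu⟩ := h
  have hω3 : ω ^ 3 = 1 := by linear_combination (ω - 1) * hω
  have hω1 : ω ≠ 1 := by rintro rfl; norm_num at hω
  have hprim : IsPrimitiveRoot ω 3 := orderOf_eq_prime hω3 hω1 ▸ IsPrimitiveRoot.orderOf ω
  have huF : u ∈ univ.filter fun j => π j ≠ j ∧ G.Adj j (π j) := by
    simpa [hadj] using (G.ne_of_adj hadj).symm
  have hsum := sum_prod_orientShift_eq_zero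
    (AddChar.zmodChar_primitive_of_primitive_root 3 hprim) π huF hu
  simp only [AddChar.zmodChar_apply] at hsum
  rw [hsum, zero_div]
end

section
/- Let G be a finite simple graph on n vertices with edge set E. In the Leibniz expansion of E_s[det(xI - A_s(ω))] with s uniform over {0,1,2}^E and ω a primitive cube root of unity, the only permutations π contributing a nonzero expectation are those corresponding to matchings: π is an involution all of whose 2-cycles are edges of G, and each such π contributes sgn(π)·x^{n - 2|M|} = (-1)^{|M|} x^{n-2|M|}, where M is the corresponding matching. -/
open scoped Classical

/-- `π` corresponds to a matching of `G`: it is an involution all of whose 2-cycles are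
edges of `G`. -/
def IsMatchingPerm {V : Type} (G : SimpleGraph V) (π : Equiv.Perm V) : Prop :=
  (∀ v, π (π v) = v) ∧ ∀ v, π v ≠ v → G.Adj v (π v)

noncomputable def om : ℂ := Complex.exp (2 * Real.pi * Complex.I / 3)

lemma om_prim : IsPrimitiveRoot om 3 := by
  convert Complex.isPrimitiveRoot_exp 3 (by norm_num) using 2
  simp [om]

lemma om_pow3 : om ^ 3 = 1 := om_prim.pow_eq_one

lemma om_ne_one : om ≠ 1 := om_prim.ne_one (by norm_num)

lemma om_sq_ne_one : om ^ 2 ≠ 1 := by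
  intro h
  apply om_ne_one
  calc om = om * om ^ 2 := by rw [h, mul_one]
    _ = om ^ 3 := by ring
    _ = 1 := om_pow3

lemma om_pow_mod (n : ℕ) : om ^ n = om ^ (n % 3) := by
  conv_lhs => rw [← Nat.div_add_mod n 3]
  rw [pow_add, pow_mul, om_pow3, one_pow, one_mul]

lemma om_pow_add (a b : ZMod 3) : om ^ (a + b).val = om ^ a.val * om ^ b.val := by
  rw [← pow_add, om_pow_mod (a.val + b.val), om_pow_mod ((a+b).val)]
  congr 1
  have := ZMod.val_add a b
  simp [this]

lemma om_pow_neg (a : ZMod 3) : om ^ a.val * om ^ (-a).val = 1 := by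
  rw [← om_pow_add]; simp

lemma sign_invol {V : Type} [Fintype V] [DecidableEq V] (π : Equiv.Perm V)
    (h : π ^ 2 = 1) : (Equiv.Perm.sign π : ℤ) = (-1) ^ (π.support.card / 2) := by
  by_cases h1 : π = 1
  · simp [h1]
  · have ho : orderOf π = 2 := orderOf_eq_prime h h1
    obtain ⟨n, hn⟩ := Equiv.Perm.cycleType_prime_order (ho ▸ Nat.prime_two)
    rw [ho] at hn
    have hsum := π.sum_cycleType
    rw [hn, Multiset.sum_replicate, smul_eq_mul] at hsum
    have hcard : π.support.card / 2 = n + 1 := by omega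
    have := Equiv.Perm.sign_of_cycleType π
    rw [hn] at this
    simp only [Multiset.sum_replicate, Multiset.card_replicate, smul_eq_mul] at this
    rw [hcard, this]
    push_cast
    rw [show (n+1)*2 + (n+1) = (n+1) + 2*(n+1) by ring, pow_add, pow_mul]
    norm_num

lemma orientShift_symm {V : Type} [LinearOrder V] {k : ℕ} (f : V → V → ZMod k) {u v : V}
    (h : u ≠ v) : orientShift f v u = - orientShift f u v := by
  unfold orientShift
  rcases h.lt_or_gt with hlt | hlt
  · rw [if_neg (asymm hlt), if_pos hlt]
  · rw [if_pos hlt, if_neg (asymm hlt), neg_neg]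

lemma sum_eq_zero_of_shift {α : Type} [Fintype α] [AddGroup α] (T : α → ℂ) (g : α) (c : ℂ)
    (hc : c ≠ 1) (h : ∀ f, T (g + f) = c * T f) : ∑ f, T f = 0 := by
  have h1 : ∑ f, T (g + f) = ∑ f, T f := Equiv.sum_comp (Equiv.addLeft g) T
  have h2 : ∑ f, T f = c * ∑ f, T f := by
    calc ∑ f, T f = ∑ f, T (g + f) := h1.symm
      _ = ∑ f, c * T f := Finset.sum_congr rfl (fun f _ => h f)
      _ = c * ∑ f, T f := (Finset.mul_sum _ _ _).symm
  have h3 : (∑ f, T f) * (1 - c) = 0 := by linear_combination h2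
  rcases mul_eq_zero.mp h3 with h4 | h4
  · exact h4
  · exact absurd (by linear_combination -h4) hc

/-- In the Leibniz expansion of `E_s[det(xI - A_s(ω))]`, `ω = e^{2πi/3}`, `s` uniform over
`{0,1,2}^E`, a permutation `π` contributes `0` unless it corresponds to a matching `M`, in
which case it contributes `sgn(π)·x^{n-2|M|} = (-1)^{|M|} x^{n-2|M|}`. -/
theorem leibniz_term_expectation_shift3 {V : Type} [Fintype V] [DecidableEq V]
    [LinearOrder V] (G : SimpleGraph V) [DecidableRel G.Adj]
    (π : Equiv.Perm V) (x : ℂ) :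
    (∑ f : V → V → ZMod 3,
        ((Equiv.Perm.sign π : ℤ) : ℂ) *
          ∏ j : V, (x • (1 : Matrix V V ℂ) -
            shiftMatrix G (orientShift f) (Complex.exp (2 * Real.pi * Complex.I / 3))) j (π j))
      / 3 ^ (Fintype.card V * Fintype.card V)
    = if IsMatchingPerm G π then
        (-1 : ℂ) ^ ((Finset.univ.filter fun v : V => π v ≠ v).card / 2) *
          x ^ (Fintype.card V - (Finset.univ.filter fun v : V => π v ≠ v).card)
      else 0 := by
  have hom : Complex.exp (2 * Real.pi * Complex.I / 3) = om := rfl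
  rw [hom]
  have hentry : ∀ (f : V → V → ZMod 3) (j : V),
      (x • (1 : Matrix V V ℂ) - shiftMatrix G (orientShift f) om) j (π j)
      = (if π j = j then x else 0)
        - (if G.Adj j (π j) then om ^ (orientShift f j (π j)).val else 0) := by
    intro f j
    simp [Matrix.sub_apply, Matrix.smul_apply, Matrix.one_apply, shiftMatrix,
      smul_eq_mul, mul_ite, eq_comm]
  by_cases hadj : ∀ j : V, π j ≠ j → G.Adj j (π j)
  case neg =>
    push_neg at hadj
    obtain ⟨j0, hj0, hna⟩ := hadj
    have hM : ¬ IsMatchingPerm G π := fun h => hna (h.2 j0 hj0)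
    rw [if_neg hM]
    have hz : (∑ f : V → V → ZMod 3, ((Equiv.Perm.sign π : ℤ) : ℂ) *
        ∏ j : V, (x • (1 : Matrix V V ℂ) - shiftMatrix G (orientShift f) om) j (π j)) = 0 := by
      apply Finset.sum_eq_zero
      intro f _
      have : ∏ j : V, (x • (1 : Matrix V V ℂ) - shiftMatrix G (orientShift f) om) j (π j) = 0 := by
        apply Finset.prod_eq_zero (Finset.mem_univ j0)
        rw [hentry f j0, if_neg hj0, if_neg hna, sub_zero]
      rw [this, mul_zero]
    rw [hz, zero_div]
  case pos =>
  by_cases hinv : ∀ v, π (π v) = v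
  case pos =>
    have hM : IsMatchingPerm G π := ⟨hinv, fun v hv => hadj v hv⟩
    rw [if_pos hM]
    set m := (Finset.univ.filter fun v : V => π v ≠ v).card with hm
    have hπ2 : π ^ 2 = 1 := by
      ext v
      simp [pow_succ, hinv v]
    have hsupp : π.support = Finset.univ.filter fun v : V => π v ≠ v := rfl
    have hm2 : 2 ∣ m := by
      have := Equiv.Perm.two_dvd_card_support hπ2
      rwa [hsupp] at this
    have hprod : ∀ f : V → V → ZMod 3,
        ∏ j : V, (x • (1 : Matrix V V ℂ) - shiftMatrix G (orientShift f) om) j (π j)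
          = x ^ (Fintype.card V - m) := by
      intro f
      rw [← Finset.prod_filter_mul_prod_filter_not Finset.univ (fun j => π j = j)]
      have hmm : (Finset.univ.filter fun j : V => ¬ π j = j).card = m := rfl
      have h1 : ∏ j ∈ Finset.univ.filter (fun j => π j = j),
          (x • (1 : Matrix V V ℂ) - shiftMatrix G (orientShift f) om) j (π j)
          = x ^ (Fintype.card V - m) := by
        rw [Finset.prod_congr rfl (fun j hj => ?_), Finset.prod_const]
        · congr 1
          have := Finset.card_filter_add_card_filter_not (s := Finset.univ)
            (p := fun j : V => π j = j)
          simp only [Finset.card_univ] at this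
          omega
        · simp only [Finset.mem_filter] at hj
          rw [hentry, if_pos hj.2, if_neg (by rw [hj.2]; exact G.irrefl), sub_zero]
      have h2 : ∏ j ∈ Finset.univ.filter (fun j => ¬ π j = j),
          (x • (1 : Matrix V V ℂ) - shiftMatrix G (orientShift f) om) j (π j) = 1 := by
        have heach : ∀ j ∈ Finset.univ.filter (fun j : V => ¬ π j = j),
            (x • (1 : Matrix V V ℂ) - shiftMatrix G (orientShift f) om) j (π j)
            = (-1) * om ^ (orientShift f j (π j)).val := by
          intro j hj
          simp only [Finset.mem_filter] at hj
          rw [hentry, if_neg hj.2, if_pos (hadj j hj.2)]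
          ring
        rw [Finset.prod_congr rfl heach, Finset.prod_mul_distrib, Finset.prod_const, hmm]
        obtain ⟨k, hk⟩ := hm2
        rw [hk, pow_mul]
        norm_num
        apply Finset.prod_involution (g := fun a _ => π a)
        · intro a ha
          simp only [Finset.mem_filter] at ha
          rw [hinv a, orientShift_symm f (fun h => ha.2 h.symm), om_pow_neg]
        · intro a ha _
          simp only [Finset.mem_filter] at ha
          exact fun h => ha.2 h
        · intro a ha
          simp only [Finset.mem_filter, Finset.mem_univ, true_and] at ha ⊢
          rw [hinv a]
          exact fun h => ha h.symm
        · intro a ha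
          exact hinv a
      rw [h1, h2, mul_one]
    have hsign : ((Equiv.Perm.sign π : ℤ) : ℂ) = (-1) ^ (m / 2) := by
      have := sign_invol π hπ2
      rw [hsupp] at this
      rw [this]
      push_cast
      ring
    have hcardfun : Fintype.card (V → V → ZMod 3) = 3 ^ (Fintype.card V * Fintype.card V) := by
      rw [Fintype.card_fun, Fintype.card_fun, ZMod.card, ← pow_mul, mul_comm]
    simp_rw [hprod, hsign, Finset.sum_const, Finset.card_univ, hcardfun, nsmul_eq_mul]
    have h9 : ((3 : ℂ)) ^ (Fintype.card V * Fintype.card V) ≠ 0 :=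
      pow_ne_zero _ (by norm_num)
    push_cast
    rw [mul_comm, mul_div_assoc, div_self h9, mul_one]
  case neg =>
    push_neg at hinv
    obtain ⟨j0, hj0⟩ := hinv
    have hM : ¬ IsMatchingPerm G π := fun h => hj0 (h.1 j0)
    rw [if_neg hM]
    refine div_eq_zero_iff.mpr (Or.inl ?_)
    have hne : π j0 ≠ j0 := fun h => hj0 (by rw [h, h])
    have hAdj : G.Adj j0 (π j0) := hadj j0 hne
    rcases lt_or_gt_of_ne hne.symm with hlt | hlt
    · -- j0 < π j0
      set g : V → V → ZMod 3 := fun a b => if a = j0 ∧ b = π j0 then 1 else 0 with hg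
      apply sum_eq_zero_of_shift _ g om om_ne_one
      intro f
      have hsame : ∀ j ∈ Finset.univ.erase j0,
          orientShift (g + f) j (π j) = orientShift f j (π j) := by
        intro j hj
        have hjne : j ≠ j0 := (Finset.mem_erase.mp hj).1
        unfold orientShift
        by_cases hjlt : j < π j
        · rw [if_pos hjlt, if_pos hjlt]
          have hz : g j (π j) = 0 := by
            rw [hg]
            simp only
            rw [if_neg (fun h => hjne h.1)]
          simp [Pi.add_apply, hz]
        · rw [if_neg hjlt, if_neg hjlt]
          have hz : g (π j) j = 0 := by
            rw [hg]
            simp only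
            rw [if_neg ?_]
            rintro ⟨h1, h2⟩
            subst h2
            exact hj0 h1
          simp [Pi.add_apply, hz]
      have hj0new : orientShift (g + f) j0 (π j0) = orientShift f j0 (π j0) + 1 := by
        unfold orientShift
        rw [if_pos hlt, if_pos hlt]
        have hz : g j0 (π j0) = 1 := by rw [hg]; simp
        simp [Pi.add_apply, hz]
        ring
      have hfac : (x • (1 : Matrix V V ℂ) - shiftMatrix G (orientShift (g + f)) om) j0 (π j0)
          = om * (x • (1 : Matrix V V ℂ) - shiftMatrix G (orientShift f) om) j0 (π j0) := by
        rw [hentry, hentry, if_neg hne, if_pos hAdj, if_pos hAdj, hj0new, om_pow_add]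
        have h1v : ((1 : ZMod 3)).val = 1 := rfl
        rw [h1v]
        ring
      have hrest : ∏ j ∈ Finset.univ.erase j0,
          (x • (1 : Matrix V V ℂ) - shiftMatrix G (orientShift (g + f)) om) j (π j)
          = ∏ j ∈ Finset.univ.erase j0,
          (x • (1 : Matrix V V ℂ) - shiftMatrix G (orientShift f) om) j (π j) := by
        apply Finset.prod_congr rfl
        intro j hj
        rw [hentry, hentry, hsame j hj]
      rw [← Finset.mul_prod_erase Finset.univ _ (Finset.mem_univ j0),
          ← Finset.mul_prod_erase Finset.univ _ (Finset.mem_univ j0), hfac, hrest]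
      ring
    · -- π j0 < j0
      set g : V → V → ZMod 3 := fun a b => if a = π j0 ∧ b = j0 then 1 else 0 with hg
      apply sum_eq_zero_of_shift _ g (om ^ 2) om_sq_ne_one
      intro f
      have hsame : ∀ j ∈ Finset.univ.erase j0,
          orientShift (g + f) j (π j) = orientShift f j (π j) := by
        intro j hj
        have hjne : j ≠ j0 := (Finset.mem_erase.mp hj).1
        unfold orientShift
        by_cases hjlt : j < π j
        · rw [if_pos hjlt, if_pos hjlt]
          have hz : g j (π j) = 0 := by
            rw [hg]
            simp only
            rw [if_neg ?_]
            rintro ⟨h1, h2⟩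
            subst h1
            exact hj0 h2
          simp [Pi.add_apply, hz]
        · rw [if_neg hjlt, if_neg hjlt]
          have hz : g (π j) j = 0 := by
            rw [hg]
            simp only
            rw [if_neg ?_]
            rintro ⟨h1, h2⟩
            exact hjne h2
          simp [Pi.add_apply, hz]
      have hj0new : orientShift (g + f) j0 (π j0) = orientShift f j0 (π j0) + (-1) := by
        unfold orientShift
        have hnlt : ¬ j0 < π j0 := asymm hlt
        rw [if_neg hnlt, if_neg hnlt]
        have hz : g (π j0) j0 = 1 := by rw [hg]; simp
        simp [Pi.add_apply, hz]
      have hfac : (x • (1 : Matrix V V ℂ) - shiftMatrix G (orientShift (g + f)) om) j0 (π j0)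
          = om ^ 2 * (x • (1 : Matrix V V ℂ) - shiftMatrix G (orientShift f) om) j0 (π j0) := by
        rw [hentry, hentry, if_neg hne, if_pos hAdj, if_pos hAdj, hj0new, om_pow_add]
        have h1v : ((-1 : ZMod 3)).val = 2 := rfl
        rw [h1v]
        ring
      have hrest : ∏ j ∈ Finset.univ.erase j0,
          (x • (1 : Matrix V V ℂ) - shiftMatrix G (orientShift (g + f)) om) j (π j)
          = ∏ j ∈ Finset.univ.erase j0,
          (x • (1 : Matrix V V ℂ) - shiftMatrix G (orientShift f) om) j (π j) := by
        apply Finset.prod_congr rfl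
        intro j hj
        rw [hentry, hentry, hsame j hj]
      rw [← Finset.mul_prod_erase Finset.univ _ (Finset.mem_univ j0),
          ← Finset.mul_prod_erase Finset.univ _ (Finset.mem_univ j0), hfac, hrest]
      ring
end

section
/- The matching polynomial of any finite graph has only real roots. -/
/-!
Write `μ_s` for the matching polynomial of the subgraph induced on a vertex set `s`. Sorting the
matchings by the edge covering a vertex `v ∈ s` (if any) gives
`μ_s = z μ_{s-v} - ∑_{u ∈ s, u ~ v} μ_{s-v-u}`, i.e.
`μ_s / μ_{s-v} = z - ∑_u (μ_{s-v} / μ_{s-v-u})⁻¹`.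
Since inversion maps the upper half-plane to the lower one, induction on `s` shows that for
`Im z > 0` every ratio `μ_s / μ_{s-v}` lies in the upper half-plane; in particular `μ_s(z) ≠ 0`.
The coefficients are real, so `μ` has no roots in the lower half-plane either.
-/

open scoped Classical

theorem Complex.inv_im_neg {w : ℂ} (hw : 0 < w.im) : w⁻¹.im < 0 := by
  rw [Complex.inv_im]
  exact div_neg_of_neg_of_pos (neg_neg_of_pos hw)
    (Complex.normSq_pos.2 fun h => by simp [h] at hw)

namespace SimpleGraph

open Finset

variable {V : Type*} (G : SimpleGraph V)

noncomputable def matchingsOn (s : Finset V) : Finset (Finset (Sym2 V)) :=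
  {M ∈ (s.sym2.filter (· ∈ G.edgeSet)).powerset | ∀ e ∈ M, ∀ f ∈ M, e ≠ f → ∀ v ∈ e, v ∉ f}

noncomputable def matchingPolyOn (s : Finset V) (z : ℂ) : ℂ :=
  ∑ M ∈ G.matchingsOn s, (-1) ^ #M * z ^ (#s - 2 * #M)

variable {G} {s : Finset V} {M N : Finset (Sym2 V)} {e : Sym2 V} {u v : V}

theorem mem_matchingsOn :
    M ∈ G.matchingsOn s ↔ (∀ e ∈ M, e ∈ G.edgeSet ∧ ∀ v ∈ e, v ∈ s) ∧
      ∀ e ∈ M, ∀ f ∈ M, e ≠ f → ∀ v ∈ e, v ∉ f := by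
  simp only [matchingsOn, mem_filter, mem_powerset, subset_iff, mem_sym2_iff]
  grind

theorem mem_matchingsOn_of_subset (hM : M ∈ G.matchingsOn s) (hNM : N ⊆ M) :
    N ∈ G.matchingsOn s := by
  rw [mem_matchingsOn] at hM ⊢
  exact ⟨fun e he => hM.1 e (hNM he), fun e he f hf => hM.2 e (hNM he) f (hNM hf)⟩

theorem notMem_of_mem_matchingsOn (hM : M ∈ G.matchingsOn s) (hv : v ∉ s) (he : v ∈ e) :
    e ∉ M :=
  fun heM => hv ((mem_matchingsOn.1 hM).1 e heM |>.2 v he)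

theorem two_mul_card_le_card_of_mem_matchingsOn (hM : M ∈ G.matchingsOn s) : 2 * #M ≤ #s := by
  obtain ⟨hedge, hdisj⟩ := mem_matchingsOn.1 hM
  calc 2 * #M = ∑ e ∈ M, #e.toFinset := by
        rw [sum_congr rfl fun e he => Sym2.card_toFinset_of_not_isDiag e
          (G.not_isDiag_of_mem_edgeSet (hedge e he).1), sum_const, smul_eq_mul, mul_comm]
    _ = #(M.biUnion Sym2.toFinset) := by
        refine (card_biUnion fun e he f hf hef => ?_).symm
        rw [Function.onFun, Finset.disjoint_left]
        exact fun v hve hvf =>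
          hdisj e he f hf hef v (Sym2.mem_toFinset.1 hve) (Sym2.mem_toFinset.1 hvf)
    _ ≤ #s := card_le_card fun v hv => by
        obtain ⟨e, he, hve⟩ := mem_biUnion.1 hv
        exact (hedge e he).2 v (Sym2.mem_toFinset.1 hve)

theorem matchingsOn_empty : G.matchingsOn ∅ = {∅} := by
  simp [matchingsOn]

theorem matchingPolyOn_empty (z : ℂ) : G.matchingPolyOn ∅ z = 1 := by
  simp [matchingPolyOn, matchingsOn_empty]

section

variable [DecidableEq V]

theorem mem_matchingsOn_erase :
    M ∈ G.matchingsOn (s.erase v) ↔ M ∈ G.matchingsOn s ∧ ∀ e ∈ M, v ∉ e := by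
  simp only [mem_matchingsOn, mem_erase]
  grind

theorem insert_mem_matchingsOn (hN : N ∈ G.matchingsOn s) (he : e ∈ G.edgeSet)
    (hes : ∀ v ∈ e, v ∈ s) (hdisj : ∀ f ∈ N, ∀ v ∈ e, v ∉ f) :
    insert e N ∈ G.matchingsOn s := by
  rw [mem_matchingsOn] at hN ⊢
  simp only [mem_insert, forall_eq_or_imp]
  grind

theorem filter_forall_notMem_matchingsOn (v : V) :
    {M ∈ G.matchingsOn s | ∀ e ∈ M, v ∉ e} = G.matchingsOn (s.erase v) := by
  ext M
  rw [mem_filter, mem_matchingsOn_erase]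

theorem filter_not_forall_notMem_matchingsOn (v : V) :
    {M ∈ G.matchingsOn s | ¬∀ e ∈ M, v ∉ e} =
      {u ∈ s | G.Adj v u}.biUnion fun u => {M ∈ G.matchingsOn s | s(v, u) ∈ M} := by
  ext M
  simp only [mem_filter, mem_biUnion]
  constructor
  · rintro ⟨hM, hvM⟩
    push Not at hvM
    obtain ⟨e, heM, hve⟩ := hvM
    obtain ⟨hedge, hes⟩ := (mem_matchingsOn.1 hM).1 e heM
    rw [← Sym2.other_spec hve] at hedge heM
    exact ⟨_, ⟨hes _ (Sym2.other_mem hve), G.mem_edgeSet.1 hedge⟩, hM, heM⟩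
  · rintro ⟨u, -, hM, he⟩
    exact ⟨hM, fun h => h _ he (Sym2.mem_mk_left v u)⟩

theorem pairwiseDisjoint_filter_mk_mem_matchingsOn (v : V) (t : Set V) :
    t.PairwiseDisjoint fun u => {M ∈ G.matchingsOn s | s(v, u) ∈ M} := by
  intro u _ u' _ huu'
  rw [Function.onFun, Finset.disjoint_left]
  intro M hM hM'
  rw [mem_filter] at hM hM'
  exact (mem_matchingsOn.1 hM.1).2 _ hM.2 _ hM'.2 (fun h => huu' (Sym2.congr_right.1 h)) v
    (Sym2.mem_mk_left v u) (Sym2.mem_mk_left v u')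

theorem image_insert_matchingsOn_erase_erase (hv : v ∈ s) (hu : u ∈ s) (hadj : G.Adj v u) :
    (G.matchingsOn ((s.erase v).erase u)).image (insert s(v, u)) =
      {M ∈ G.matchingsOn s | s(v, u) ∈ M} := by
  ext M
  simp only [mem_image, mem_filter, mem_matchingsOn_erase]
  constructor
  · rintro ⟨N, ⟨⟨hN, hvN⟩, huN⟩, rfl⟩
    refine ⟨insert_mem_matchingsOn hN hadj ?_ ?_, mem_insert_self _ _⟩
    · intro w hw
      rcases Sym2.mem_iff.1 hw with rfl | rfl
      exacts [hv, hu]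
    · intro f hf w hw
      rcases Sym2.mem_iff.1 hw with rfl | rfl
      exacts [hvN f hf, huN f hf]
  · rintro ⟨hM, he⟩
    have hdisj := (mem_matchingsOn.1 hM).2 _ he
    refine ⟨M.erase s(v, u), ⟨⟨mem_matchingsOn_of_subset hM (erase_subset _ _), ?_⟩, ?_⟩,
      insert_erase he⟩ <;> intro f hf <;> obtain ⟨hfe, hfM⟩ := mem_erase.1 hf
    · exact hdisj f hfM hfe.symm v (Sym2.mem_mk_left v u)
    · exact hdisj f hfM hfe.symm u (Sym2.mem_mk_right v u)

theorem sum_filter_forall_notMem_matchingsOn (hv : v ∈ s) (z : ℂ) :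
    ∑ M ∈ G.matchingsOn s with ∀ e ∈ M, v ∉ e, (-1) ^ #M * z ^ (#s - 2 * #M) =
      z * G.matchingPolyOn (s.erase v) z := by
  rw [filter_forall_notMem_matchingsOn, matchingPolyOn, mul_sum]
  refine sum_congr rfl fun M hM => ?_
  have hM2 := two_mul_card_le_card_of_mem_matchingsOn hM
  have hs := card_pos.2 ⟨v, hv⟩
  rw [card_erase_of_mem hv] at hM2 ⊢
  rw [show #s - 2 * #M = #s - 1 - 2 * #M + 1 by omega, pow_succ]
  ring

theorem sum_filter_mk_mem_matchingsOn (hv : v ∈ s) (hu : u ∈ s) (hadj : G.Adj v u) (z : ℂ) :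
    ∑ M ∈ G.matchingsOn s with s(v, u) ∈ M, (-1) ^ #M * z ^ (#s - 2 * #M) =
      -G.matchingPolyOn ((s.erase v).erase u) z := by
  have hcard : #((s.erase v).erase u) = #s - 2 := by
    rw [card_erase_of_mem (mem_erase.2 ⟨hadj.ne', hu⟩), card_erase_of_mem hv]
    omega
  have hnotMem {N} (hN : N ∈ G.matchingsOn ((s.erase v).erase u)) : s(v, u) ∉ N :=
    notMem_of_mem_matchingsOn hN (by simp) (Sym2.mem_mk_left v u)
  rw [← image_insert_matchingsOn_erase_erase hv hu hadj, sum_image, matchingPolyOn,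
    ← sum_neg_distrib]
  · refine sum_congr rfl fun N hN => ?_
    have hN2 := two_mul_card_le_card_of_mem_matchingsOn hN
    rw [hcard] at hN2 ⊢
    rw [card_insert_of_notMem (hnotMem hN), show #s - 2 * (#N + 1) = #s - 2 - 2 * #N by omega,
      pow_succ]
    ring
  · intro N₁ hN₁ N₂ hN₂ h
    rw [← erase_insert (hnotMem hN₁), h, erase_insert (hnotMem hN₂)]

theorem matchingPolyOn_eq_sub (hv : v ∈ s) (z : ℂ) :
    G.matchingPolyOn s z = z * G.matchingPolyOn (s.erase v) z -
      ∑ u ∈ s with G.Adj v u, G.matchingPolyOn ((s.erase v).erase u) z := by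
  rw [matchingPolyOn, ← sum_filter_add_sum_filter_not _ (fun M => ∀ e ∈ M, v ∉ e),
    sum_filter_forall_notMem_matchingsOn hv, filter_not_forall_notMem_matchingsOn,
    sum_biUnion (pairwiseDisjoint_filter_mk_mem_matchingsOn _ _), sub_eq_add_neg,
    ← sum_neg_distrib]
  congr 1
  refine sum_congr rfl fun u hu => ?_
  rw [mem_filter] at hu
  exact sum_filter_mk_mem_matchingsOn hv hu.1 hu.2 z

theorem matchingPolyOn_ne_zero_of_forall_im_div_pos {z : ℂ}
    (h : ∀ v ∈ s, 0 < (G.matchingPolyOn s z / G.matchingPolyOn (s.erase v) z).im) :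
    G.matchingPolyOn s z ≠ 0 := by
  rcases s.eq_empty_or_nonempty with rfl | ⟨v, hv⟩
  · simp [matchingPolyOn_empty]
  · intro h0
    simpa [h0] using h v hv

theorem im_matchingPolyOn_div_erase_pos {z : ℂ} (hz : 0 < z.im) (hv : v ∈ s) :
    0 < (G.matchingPolyOn s z / G.matchingPolyOn (s.erase v) z).im := by
  induction s using Finset.strongInduction generalizing v with
  | H s ih =>
  have hsv := erase_ssubset hv
  have hne : G.matchingPolyOn (s.erase v) z ≠ 0 :=
    matchingPolyOn_ne_zero_of_forall_im_div_pos fun u hu => ih _ hsv hu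
  have hdiv : G.matchingPolyOn s z / G.matchingPolyOn (s.erase v) z =
      z - ∑ u ∈ s with G.Adj v u,
        (G.matchingPolyOn (s.erase v) z / G.matchingPolyOn ((s.erase v).erase u) z)⁻¹ := by
    simp only [matchingPolyOn_eq_sub hv, sub_div, mul_div_cancel_right₀ _ hne, sum_div, inv_div]
  have hsum : ∑ u ∈ s with G.Adj v u,
      (G.matchingPolyOn (s.erase v) z / G.matchingPolyOn ((s.erase v).erase u) z)⁻¹.im ≤ 0 := by
    refine sum_nonpos fun u hu => (Complex.inv_im_neg (ih _ hsv ?_)).le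
    rw [mem_filter] at hu
    exact mem_erase.2 ⟨hu.2.ne', hu.1⟩
  rw [hdiv, Complex.sub_im, Complex.im_sum]
  linarith

end

theorem matchingPolyOn_ne_zero {z : ℂ} (hz : 0 < z.im) (s : Finset V) :
    G.matchingPolyOn s z ≠ 0 := by
  classical
  exact matchingPolyOn_ne_zero_of_forall_im_div_pos fun _ hv =>
    G.im_matchingPolyOn_div_erase_pos hz hv

end SimpleGraph

section

open Finset ComplexConjugate

variable {V : Type} [Fintype V] [DecidableEq V] (G : SimpleGraph V)

theorem SimpleGraph.filter_matchingsOn_univ_card_eq (k : ℕ) :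
    {M ∈ G.matchingsOn univ | #M = k} = {M ∈ G.edgeFinset.powersetCard k |
      ∀ e ∈ M, ∀ f ∈ M, e ≠ f → ∀ v : V, v ∈ e → v ∉ f} := by
  ext M
  simp only [mem_filter, mem_matchingsOn, mem_powersetCard, subset_iff, mem_edgeFinset, mem_univ]
  grind

theorem matchingPolyEval_eq_matchingPolyOn_univ (z : ℂ) :
    matchingPolyEval G z = G.matchingPolyOn univ z := by
  rw [SimpleGraph.matchingPolyOn, ← sum_fiberwise_of_maps_to (g := card)
    (t := range (Fintype.card V / 2 + 1)) fun M hM => ?_]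
  · refine sum_congr rfl fun k _ => ?_
    rw [sum_congr rfl fun M hM => by rw [(mem_filter.1 hM).2], sum_const,
      G.filter_matchingsOn_univ_card_eq, matchingCount, card_univ, nsmul_eq_mul]
    ring
  · have := G.two_mul_card_le_card_of_mem_matchingsOn hM
    rw [mem_range, card_univ] at *
    omega

theorem matchingPolyEval_conj (z : ℂ) :
    matchingPolyEval G (conj z) = conj (matchingPolyEval G z) := by
  simp [matchingPolyEval, map_sum]

theorem matchingPolyEval_ne_zero_of_im_pos {z : ℂ} (hz : 0 < z.im) : matchingPolyEval G z ≠ 0 := by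
  rw [matchingPolyEval_eq_matchingPolyOn_univ]
  exact G.matchingPolyOn_ne_zero hz univ

end

/-- Heilmann–Lieb real-rootedness: every (complex) root of the matching polynomial of a
finite graph is real. -/
theorem matchingPoly_roots_real {V : Type} [Fintype V] [DecidableEq V]
    (G : SimpleGraph V) (z : ℂ) (hz : matchingPolyEval G z = 0) : z.im = 0 := by
  by_contra him
  rcases lt_or_gt_of_ne him with hneg | hpos
  · refine matchingPolyEval_ne_zero_of_im_pos G (z := starRingEnd ℂ z) (by simpa using hneg) ?_
    rw [matchingPolyEval_conj, hz, map_zero]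
  · exact matchingPolyEval_ne_zero_of_im_pos G hpos hz
end
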